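/- For every n ≥ 1, the generalized aggregation principle (Iφ₁ ∧ ... ∧ Iφₙ) → I(φ₁ ∨ ... ∨ φₙ) is true at every world of every LEI-model. -/
import Mathlib


/-- Three truth values of strong Kleene logic: `f` (0), `n` (∅), `t` (1). -/
inductive TV where
  | f : TV
  | n : TV
  | t : TV
deriving DecidableEq

/-- Kleene negation: swaps 1 and 0, fixes ∅. -/
def TV.neg : TV → TV
  | .t => .f
  | .n => .n
  | .f => .t

/-- Kleene conjunction: minimum under 0 < ∅ < 1. -/
def TV.and : TV → TV → TV
  | .t, b => b
  | .n, .t => .n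
  | .n, b => b
  | .f, _ => .f

/-- Kleene disjunction: maximum under 0 < ∅ < 1. -/
def TV.or : TV → TV → TV
  | .f, b => b
  | .n, .f => .n
  | .n, b => b
  | .t, _ => .t

/-- Two-valued implication: value 1 unless the antecedent is 1 and the consequent is not. -/
def TV.imp : TV → TV → TV
  | .t, .t => .t
  | .t, _ => .f
  | _, _ => .t

/-- Modal formulas of LEI: atoms, ¬, ∧, ∨, → and the ignorance operator I. -/
inductive MForm where
  | atom : ℕ → MForm
  | neg : MForm → MForm
  | conj : MForm → MForm → MForm
  | disj : MForm → MForm → MForm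
  | impl : MForm → MForm → MForm
  | ig : MForm → MForm

/-- A LEI-model: a Kripke frame with a three-valued atomic valuation. -/
structure LEIModel (W : Type) where
  R : W → W → Prop
  V : ℕ → W → TV

open Classical in
/-- Three-valued evaluation in a LEI-model: strong Kleene clauses for ¬, ∧, ∨,
two-valued implication, and `I φ` is `t` at `w` iff `φ` is `t` at `w` and `φ` is not `t`
at any accessible world distinct from `w`; otherwise `I φ` is `f`. -/
noncomputable def val {W : Type} (M : LEIModel W) : MForm → W → TV
  | .atom k, w => M.V k w
  | .neg φ, w => (val M φ w).neg
  | .conj φ ψ, w => (val M φ w).and (val M ψ w)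
  | .disj φ ψ, w => (val M φ w).or (val M ψ w)
  | .impl φ ψ, w => (val M φ w).imp (val M ψ w)
  | .ig φ, w =>
      if val M φ w = TV.t ∧ ∀ w', w' ≠ w → M.R w w' → val M φ w' ≠ TV.t then TV.t
      else TV.f

/-- Conjunction of a nonempty list of formulas: φ₁ ∧ (φ₂ ∧ (... ∧ φₙ)). -/
def conjList : MForm → List MForm → MForm
  | φ, [] => φ
  | φ, ψ :: l => .conj φ (conjList ψ l)

/-- Disjunction of a nonempty list of formulas: φ₁ ∨ (φ₂ ∨ (... ∨ φₙ)). -/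
def disjList : MForm → List MForm → MForm
  | φ, [] => φ
  | φ, ψ :: l => .disj φ (disjList ψ l)

lemma TV.and_eq_t {a b : TV} (h : a.and b = TV.t) : a = TV.t ∧ b = TV.t := by
  cases a <;> cases b <;> simp_all [TV.and]

lemma TV.or_eq_t {a b : TV} (h : a.or b = TV.t) : a = TV.t ∨ b = TV.t := by
  cases a <;> cases b <;> simp_all [TV.or]

lemma TV.or_t_left (b : TV) : TV.t.or b = TV.t := rfl

lemma conjList_map_ig_t {W : Type} (M : LEIModel W) (w : W) :
    ∀ (φ : MForm) (l : List MForm),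
      val M (conjList (.ig φ) (l.map .ig)) w = TV.t →
      val M (.ig φ) w = TV.t ∧ ∀ ψ ∈ l, val M (.ig ψ) w = TV.t := by
  intro φ l
  induction l generalizing φ with
  | nil => intro h; exact ⟨h, by simp⟩
  | cons ψ l ih =>
    intro h
    simp only [List.map, conjList, val] at h
    obtain ⟨h1, h2⟩ := TV.and_eq_t h
    obtain ⟨h3, h4⟩ := ih ψ h2
    exact ⟨h1, by intro χ hχ; rcases List.mem_cons.mp hχ with rfl | hχ; exact h3; exact h4 _ hχ⟩

lemma disjList_ne_t {W : Type} (M : LEIModel W) (w : W) :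
    ∀ (φ : MForm) (l : List MForm),
      val M φ w ≠ TV.t → (∀ ψ ∈ l, val M ψ w ≠ TV.t) →
      val M (disjList φ l) w ≠ TV.t := by
  intro φ l
  induction l generalizing φ with
  | nil => intro h _; exact h
  | cons ψ l ih =>
    intro h1 h2
    simp only [disjList, val]
    intro hor
    rcases TV.or_eq_t hor with h | h
    · exact h1 h
    · exact ih ψ (h2 ψ (by simp)) (fun χ hχ => h2 χ (by simp [hχ])) h

lemma ig_t {W : Type} (M : LEIModel W) (φ : MForm) (w : W)
    (h : val M (.ig φ) w = TV.t) :
    val M φ w = TV.t ∧ ∀ w', w' ≠ w → M.R w w' → val M φ w' ≠ TV.t := by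
  by_contra hc
  simp only [val, if_neg hc] at h
  exact absurd h (by decide)

lemma disjList_t {W : Type} (M : LEIModel W) (w : W) (φ : MForm) (l : List MForm)
    (h : val M φ w = TV.t) : val M (disjList φ l) w = TV.t := by
  cases l with
  | nil => exact h
  | cons ψ l => simp only [disjList, val, h]; rfl

/-- Generalized aggregation: for every n ≥ 1, (Iφ₁ ∧ ... ∧ Iφₙ) → I(φ₁ ∨ ... ∨ φₙ)
is true at every world of every LEI-model. -/
theorem stmt9 {W : Type} (M : LEIModel W) (φ : MForm) (l : List MForm) (w : W) :
    val M (.impl (conjList (.ig φ) (l.map .ig)) (.ig (disjList φ l))) w = TV.t := by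
  show (val M (conjList (.ig φ) (l.map .ig)) w).imp (val M (.ig (disjList φ l)) w) = TV.t
  by_cases hA : val M (conjList (.ig φ) (l.map .ig)) w = TV.t
  · obtain ⟨h1, h2⟩ := conjList_map_ig_t M w φ l hA
    obtain ⟨hφt, hφ'⟩ := ig_t M φ w h1
    have hcons : val M (.ig (disjList φ l)) w = TV.t := by
      simp only [val]
      rw [if_pos]
      refine ⟨disjList_t M w φ l hφt, fun w' hne hR => ?_⟩
      refine disjList_ne_t M w' φ l (hφ' w' hne hR) (fun ψ hψ => ?_)
      exact (ig_t M ψ w (h2 ψ hψ)).2 w' hne hR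
    rw [hA, hcons]; rfl
  · cases hv : val M (conjList (.ig φ) (l.map .ig)) w <;> simp_all [TV.imp]
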